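/- arXiv:2111.06944 — 7 statements merged into one kernel-verified Lean document; each statement's English description precedes it below -/
import Mathlib

section
/- Let λ₁, ..., λₙ be distinct real numbers and c₁, ..., cₙ real numbers, and let a be a nonzero real number. If f(β) = c₁·exp(β·λ₁) + ... + cₙ·exp(β·λₙ) is not constant, then the equation f(β) = a has at most n real solutions. -/
/-!
Descartes' rule of signs for exponential sums, in its Rolle form. Multiplying
`∑ d μ * exp (x * μ)` by `exp (-(x * ν))` for one exponent `ν` does not change its zeros, and
the derivative of the product is `exp (-(x * ν))` times an exponential sum with one exponent
fewer. By Rolle's theorem each differentiation loses at most one zero, so by induction a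
nonzero exponential sum with `m` distinct exponents has fewer than `m` zeros. The function
`f - a` is an exponential sum with at most `n + 1` exponents, the constant `-a` carrying
exponent `0`.
-/

open Real Finset

theorem Set.encard_le_coe_of_forall_finset_card_le {α : Type*} {s : Set α} {k : ℕ}
    (h : ∀ t : Finset α, ↑t ⊆ s → #t ≤ k) : s.encard ≤ k := by
  by_contra! hlt
  obtain ⟨t, hts, ht⟩ :=
    Set.exists_subset_encard_eq ((ENat.add_one_le_iff (ENat.natCast_ne_top k)).2 hlt)
  obtain ⟨t, rfl⟩ := (Set.finite_of_encard_eq_coe ht).exists_finset_coe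
  rw [Set.encard_coe_eq_coe_finsetCard] at ht
  have := h t hts
  norm_cast at ht
  omega

theorem encard_setOf_eq_zero_le_encard_setOf_deriv_eq_zero_add_one {h : ℝ → ℝ}
    (hd : Differentiable ℝ h) :
    {x | h x = 0}.encard ≤ {x | deriv h x = 0}.encard + 1 := by
  rcases Set.finite_or_infinite {x | deriv h x = 0} with hfin | hinf
  · obtain ⟨T, hT⟩ := hfin.exists_finset_coe
    rw [← hT, Set.encard_coe_eq_coe_finsetCard]
    exact_mod_cast Set.encard_le_coe_of_forall_finset_card_le fun Z hZ =>
      card_le_of_interleaved fun x hx y hy hxy _ => by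
        obtain ⟨z, hz, hdz⟩ := exists_deriv_eq_zero hxy hd.continuous.continuousOn
          ((show h x = 0 from hZ hx).trans (hZ hy).symm)
        exact ⟨z, by rwa [← Finset.mem_coe, hT], hz⟩
  · simp [hinf.encard_eq]

theorem hasDerivAt_sum_mul_exp (s : Finset ℝ) (d : ℝ → ℝ) (x : ℝ) :
    HasDerivAt (fun x => ∑ μ ∈ s, d μ * exp (x * μ)) (∑ μ ∈ s, d μ * μ * exp (x * μ)) x :=
  HasDerivAt.fun_sum fun μ _ =>
    (((hasDerivAt_mul_const μ).exp).const_mul (d μ)).congr_deriv (by ring)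

theorem hasDerivAt_exp_neg_mul_mul_sum_mul_exp (s : Finset ℝ) (d : ℝ → ℝ) (ν x : ℝ) :
    HasDerivAt (fun x => exp (-(x * ν)) * ∑ μ ∈ s, d μ * exp (x * μ))
      (exp (-(x * ν)) * ∑ μ ∈ s, d μ * (μ - ν) * exp (x * μ)) x := by
  refine (((hasDerivAt_mul_const ν).fun_neg.exp).fun_mul
    (hasDerivAt_sum_mul_exp s d x)).congr_deriv ?_
  simp only [mul_sum, ← sum_add_distrib]
  exact sum_congr rfl fun μ _ => by ring

theorem encard_setOf_sum_mul_exp_eq_zero_lt (s : Finset ℝ) {d : ℝ → ℝ}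
    (hne : ∃ x, ∑ μ ∈ s, d μ * exp (x * μ) ≠ 0) :
    {x | ∑ μ ∈ s, d μ * exp (x * μ) = 0}.encard < #s := by
  induction s using Finset.induction_on generalizing d with
  | empty => simp at hne
  | insert ν t hν ih =>
    set F := fun x => ∑ μ ∈ insert ν t, d μ * exp (x * μ)
    set h := fun x => exp (-(x * ν)) * F x
    have hF_zero_iff (x : ℝ) : F x = 0 ↔ h x = 0 := by simp [h, exp_ne_zero]
    have hderiv (x : ℝ) : deriv h x = exp (-(x * ν)) * ∑ μ ∈ t, d μ * (μ - ν) * exp (x * μ) := by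
      rw [(hasDerivAt_exp_neg_mul_mul_sum_mul_exp _ d ν x).deriv, sum_insert hν, sub_self,
        mul_zero, zero_mul, zero_add]
    have hdiff : Differentiable ℝ h := fun x =>
      (hasDerivAt_exp_neg_mul_mul_sum_mul_exp _ d ν x).differentiableAt
    show {x | F x = 0}.encard < #(insert ν t)
    rw [card_insert_of_notMem hν, Nat.cast_succ]
    by_cases hG : ∀ x, ∑ μ ∈ t, d μ * (μ - ν) * exp (x * μ) = 0
    · have hconst := is_const_of_deriv_eq_zero hdiff fun x => by simp [hderiv, hG]
      obtain ⟨x₀, hx₀⟩ := hne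
      have hno_zeros : {x | F x = 0} = ∅ :=
        Set.eq_empty_of_forall_notMem fun x hx =>
          hx₀ ((hF_zero_iff x₀).2 ((hconst x₀ x).trans ((hF_zero_iff x).1 hx)))
      simp [hno_zeros]
    · have hderiv_zero_iff (x : ℝ) :
          deriv h x = 0 ↔ ∑ μ ∈ t, d μ * (μ - ν) * exp (x * μ) = 0 := by
        simp [hderiv, exp_ne_zero]
      calc {x | F x = 0}.encard = {x | h x = 0}.encard := by simp only [hF_zero_iff]
        _ ≤ {x | deriv h x = 0}.encard + 1 :=
          encard_setOf_eq_zero_le_encard_setOf_deriv_eq_zero_add_one hdiff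
        _ ≤ #t := by
          simp only [hderiv_zero_iff]
          exact Order.add_one_le_of_lt (ih (not_forall.1 hG))
        _ < #t + 1 := ENat.natCast_lt_succ

theorem sum_mul_exp_eq_sum_image {ι : Type*} (s : Finset ι) (μ d : ι → ℝ) (x : ℝ) :
    ∑ i ∈ s, d i * exp (x * μ i) = ∑ ν ∈ s.image μ, (∑ i ∈ s with μ i = ν, d i) * exp (x * ν) := by
  rw [← sum_fiberwise_of_maps_to fun i hi => mem_image_of_mem μ hi]
  refine sum_congr rfl fun ν _ => ?_
  rw [sum_mul]
  exact sum_congr rfl fun i hi => by rw [(mem_filter.1 hi).2]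

theorem encard_setOf_sum_mul_exp_eq_zero_lt_card_image {ι : Type*} (s : Finset ι) {μ d : ι → ℝ}
    (hne : ∃ x, ∑ i ∈ s, d i * exp (x * μ i) ≠ 0) :
    {x | ∑ i ∈ s, d i * exp (x * μ i) = 0}.encard < #(s.image μ) := by
  simp only [sum_mul_exp_eq_sum_image s μ d] at hne ⊢
  exact encard_setOf_sum_mul_exp_eq_zero_lt _ hne

theorem expSum_level_solutions_le_general (n : ℕ) (lam c : Fin n → ℝ)
    (a : ℝ)
    (f : ℝ → ℝ)
    (hf : f = fun β => ∑ k : Fin n, c k * Real.exp (β * lam k))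
    (hnc : ¬ ∃ K : ℝ, ∀ β : ℝ, f β = K) :
    {β : ℝ | f β = a}.Finite ∧ {β : ℝ | f β = a}.ncard ≤ n := by
  set μ : Option (Fin n) → ℝ := fun i => i.elim 0 lam
  set d : Option (Fin n) → ℝ := fun i => i.elim (-a) c
  have hsub (β : ℝ) : f β - a = ∑ i, d i * exp (β * μ i) := by
    simp only [hf, Fintype.sum_option, Option.elim_none, Option.elim_some, mul_zero, exp_zero,
      mul_one, d, μ]
    ring
  have hne : ∃ β, ∑ i, d i * exp (β * μ i) ≠ 0 := by
    by_contra! h0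
    exact hnc ⟨a, fun β => sub_eq_zero.1 ((hsub β).trans (h0 β))⟩
  rw [← Set.encard_le_coe_iff_finite_ncard_le, ← ENat.lt_add_one_iff (ENat.natCast_ne_top n)]
  calc {β | f β = a}.encard = {β | ∑ i, d i * exp (β * μ i) = 0}.encard := by
        simp only [← hsub, sub_eq_zero]
    _ < #(univ.image μ) := encard_setOf_sum_mul_exp_eq_zero_lt_card_image univ hne
    _ ≤ n + 1 := by exact_mod_cast card_image_le.trans (by simp)

theorem expSum_level_solutions_le (n : ℕ) (lam c : Fin n → ℝ)
    (hlam : Function.Injective lam) (a : ℝ) (ha : a ≠ 0)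
    (f : ℝ → ℝ)
    (hf : f = fun β => ∑ k : Fin n, c k * Real.exp (β * lam k))
    (hnc : ¬ ∃ K : ℝ, ∀ β : ℝ, f β = K) :
    {β : ℝ | f β = a}.Finite ∧ {β : ℝ | f β = a}.ncard ≤ n :=
  expSum_level_solutions_le_general n lam c a f hf hnc
end

section
/- Let A be a real symmetric n×n matrix and i, j two indices. If the function g(β) = (exp(β·A))ᵢᵢ − (exp(β·A))ⱼⱼ has a zero set in (0, ∞) with an accumulation point inside (0, ∞), then for every natural number r, (Aʳ)ᵢᵢ = (Aʳ)ⱼⱼ. -/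
/-!
The function `β ↦ exp(βA)ᵢᵢ - exp(βA)ⱼⱼ` is real analytic on all of `ℝ`, so by the identity
theorem a zero set with an accumulation point forces it to vanish identically. Its `r`-th
derivative at `β = 0` is `(Aʳ)ᵢᵢ - (Aʳ)ⱼⱼ`, which therefore vanishes as well.
-/

open Matrix NormedSpace Filter Set Topology

section ExpSmul

variable {𝕂 𝔸 F : Type*} [RCLike 𝕂] [NormedRing 𝔸] [NormedAlgebra 𝕂 𝔸] [CompleteSpace 𝔸]
  [NormedAddCommGroup F] [NormedSpace 𝕂 F]

theorem analyticAt_exp_smul_const (a : 𝔸) (t : 𝕂) :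
    AnalyticAt 𝕂 (fun u : 𝕂 => exp (u • a)) t :=
  (exp_analytic (𝕂 := 𝕂) (t • a)).comp (f := fun u : 𝕂 => u • a)
    ((ContinuousLinearMap.smulRight (.id 𝕂 𝕂) a).analyticAt t)

theorem hasDerivAt_pow_mul_exp_smul_const (a : 𝔸) (r : ℕ) (t : 𝕂) :
    HasDerivAt (fun u : 𝕂 => a ^ r * exp (u • a)) (a ^ (r + 1) * exp (t • a)) t := by
  simpa only [pow_succ, mul_assoc] using (hasDerivAt_exp_smul_const' a t).const_mul (a ^ r)

theorem map_pow_eq_zero_of_map_exp_smul_eq_zero (L : 𝔸 →L[𝕂] F) (a : 𝔸)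
    (h : ∀ t : 𝕂, L (exp (t • a)) = 0) (r : ℕ) : L (a ^ r) = 0 := by
  suffices ∀ t : 𝕂, L (a ^ r * exp (t • a)) = 0 by simpa using this 0
  induction r with
  | zero => simpa using h
  | succ r ih =>
    intro t
    have hderiv := L.hasFDerivAt.comp_hasDerivAt t (hasDerivAt_pow_mul_exp_smul_const a r t)
    have hconst : (L ∘ fun u : 𝕂 => a ^ r * exp (u • a)) = fun _ => 0 := funext ih
    rw [hconst] at hderiv
    exact ((hasDerivAt_const t 0).unique hderiv).symm

end ExpSmul

theorem cospectral_of_accPt_of_subgraphCentrality_eq_general (n : ℕ)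
    (A : Matrix (Fin n) (Fin n) ℝ) (i j : Fin n)
    (g : ℝ → ℝ)
    (hg : g = fun β => (NormedSpace.exp (β • A)) i i - (NormedSpace.exp (β • A)) j j)
    (x : ℝ)
    (hacc : AccPt x (Filter.principal {β : ℝ | β ∈ Set.Ioi (0 : ℝ) ∧ g β = 0})) :
    ∀ r : ℕ, (A ^ r) i i = (A ^ r) j j := by
  -- `exp` depends only on the topology, so any algebra norm on matrices will do.
  let _ : NormedRing (Matrix (Fin n) (Fin n) ℝ) := Matrix.linftyOpNormedRing
  let _ : NormedAlgebra ℝ (Matrix (Fin n) (Fin n) ℝ) := Matrix.linftyOpNormedAlgebra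
  let L : Matrix (Fin n) (Fin n) ℝ →L[ℝ] ℝ :=
    (entryLinearMap ℝ ℝ i i - entryLinearMap ℝ ℝ j j).toContinuousLinearMap
  have hgL : g = fun β => L (exp (β • A)) := hg
  have hg_analytic : AnalyticOnNhd ℝ g univ := by
    rw [hgL]
    exact fun β _ => (L.analyticAt _).comp (analyticAt_exp_smul_const A β)
  have hg_frequently : ∃ᶠ β in 𝓝[≠] x, g β = (0 : ℝ → ℝ) β :=
    accPt_iff_frequently_nhdsNE.1 (hacc.mono (principal_mono.2 fun _ hβ => hβ.2))
  have hg_zero : g = 0 := hg_analytic.eq_of_frequently_eq analyticOnNhd_const hg_frequently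
  intro r
  have hL_zero (t : ℝ) : L (exp (t • A)) = 0 := by simpa [hgL] using congrFun hg_zero t
  exact sub_eq_zero.1 (map_pow_eq_zero_of_map_exp_smul_eq_zero L A hL_zero r)

theorem cospectral_of_accPt_of_subgraphCentrality_eq (n : ℕ)
    (A : Matrix (Fin n) (Fin n) ℝ) (hA : A.IsSymm) (i j : Fin n)
    (g : ℝ → ℝ)
    (hg : g = fun β => (NormedSpace.exp (β • A)) i i - (NormedSpace.exp (β • A)) j j)
    (x : ℝ) (hx : x ∈ Set.Ioi (0 : ℝ))
    (hacc : AccPt x (Filter.principal {β : ℝ | β ∈ Set.Ioi (0 : ℝ) ∧ g β = 0})) :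
    ∀ r : ℕ, (A ^ r) i i = (A ^ r) j j :=
  cospectral_of_accPt_of_subgraphCentrality_eq_general n A i j g hg x hacc
end

section
/- Let A be a real symmetric n×n matrix with exactly d distinct eigenvalues, and let i, j be indices such that vertices i and j are not cospectral (i.e., (Aʳ)ᵢᵢ ≠ (Aʳ)ⱼⱼ for some r). Then the set of β > 0 with (exp(β·A))ᵢᵢ = (exp(β·A))ⱼⱼ has at most d − 1 elements. -/
/-!
Diagonalising `A = U diag(λ) Uᵀ` gives, for every function `f`,
`f(A)ᵢᵢ - f(A)ⱼⱼ = ∑_{t ∈ spec A} c_t f(t)` with `c_t = ∑_{λ_k = t} (U_{ik}² - U_{jk}²)`.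
Taking `f = (·)^r` shows that some `c_t` is nonzero, and taking `f = exp(β ·)` shows that the
interlacing values are zeros of the exponential sum `∑ c_t e^{tβ}`. Such a sum with `m` nonzero
terms has at most `m - 1` real zeros: multiplying by `e^{-aβ}`, `a` the smallest frequency, keeps
the zeros and makes the derivative an exponential sum with `m - 1` terms, which by Rolle's theorem
vanishes strictly between any two of them.
-/

open Matrix

theorem finite_and_ncard_le_of_interleaved {α : Type*} [LinearOrder α] {Z W : Set α}
    (hW : W.Finite) (h : ∀ x ∈ Z, ∀ y ∈ Z, x < y → ∃ z ∈ W, x < z ∧ z < y) :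
    Z.Finite ∧ Z.ncard ≤ W.ncard + 1 := by
  have key : ∀ T : Finset α, ↑T ⊆ Z → T.card ≤ W.ncard + 1 := fun T hT => by
    rw [Set.ncard_eq_toFinset_card _ hW]
    exact Finset.card_le_of_interleaved fun x hx y hy hxy _ => by
      simpa using h x (hT hx) y (hT hy) hxy
  have hZ : Z.Finite := Set.not_infinite.1 fun hinf => by
    obtain ⟨T, hTZ, hT⟩ := hinf.exists_subset_card_eq (W.ncard + 2)
    have := key T hTZ
    omega
  exact ⟨hZ, by simpa [Set.ncard_eq_toFinset_card _ hZ] using key hZ.toFinset (by simp)⟩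

noncomputable def expSum (s : Finset ℝ) (c : ℝ → ℝ) (x : ℝ) : ℝ := ∑ t ∈ s, c t * Real.exp (t * x)

theorem hasDerivAt_expSum (s : Finset ℝ) (c : ℝ → ℝ) (x : ℝ) :
    HasDerivAt (expSum s c) (expSum s (fun t => c t * t) x) x := by
  unfold expSum
  refine HasDerivAt.fun_sum fun t _ => ?_
  simpa [mul_comm, mul_left_comm, mul_assoc] using
    (((hasDerivAt_id x).const_mul t).exp.const_mul (c t))

theorem hasDerivAt_exp_neg_mul_mul_expSum (s : Finset ℝ) (c : ℝ → ℝ) (a x : ℝ) :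
    HasDerivAt (fun y => Real.exp (-(a * y)) * expSum s c y)
      (Real.exp (-(a * x)) * expSum s (fun t => c t * (t - a)) x) x := by
  refine ((((hasDerivAt_id x).const_mul a).neg.exp).mul (hasDerivAt_expSum s c x)).congr_deriv ?_
  simp only [expSum, Pi.neg_apply, id, Finset.mul_sum, ← Finset.sum_add_distrib]
  refine Finset.sum_congr rfl fun t _ => ?_
  ring

theorem expSum_zeros_finite_and_ncard_lt_of_forall_ne_zero (s : Finset ℝ) (c : ℝ → ℝ)
    (hs : s.Nonempty) (hc : ∀ t ∈ s, c t ≠ 0) :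
    {x | expSum s c x = 0}.Finite ∧ {x | expSum s c x = 0}.ncard < s.card := by
  induction s using Finset.induction_on_min generalizing c with
  | empty => simp at hs
  | insert a s ha ih =>
    have has : a ∉ s := fun h => lt_irrefl a (ha a h)
    rcases s.eq_empty_or_nonempty with rfl | hs
    · have : {x | expSum {a} c x = 0} = ∅ := by
        ext x
        simpa [expSum] using hc a (by simp)
      simp [this]
    set c' : ℝ → ℝ := fun t => c t * (t - a)
    obtain ⟨hW, hWcard⟩ := ih c' hs fun t ht =>
      mul_ne_zero (hc t (by simp [ht])) (sub_ne_zero.2 (ha t ht).ne')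
    have hderiv := hasDerivAt_exp_neg_mul_mul_expSum (insert a s) c a
    obtain ⟨hZ, hZcard⟩ := finite_and_ncard_le_of_interleaved
        (Z := {x | expSum (insert a s) c x = 0}) hW fun x hx y hy hxy => by
      obtain ⟨z, hz, hz0⟩ := exists_hasDerivAt_eq_zero hxy
        (HasDerivAt.continuousOn fun y _ => hderiv y)
        (by rw [hx.out, hy.out, mul_zero, mul_zero]) fun y _ => hderiv y
      refine ⟨z, ?_, hz.1, hz.2⟩
      simpa [expSum, c', Finset.sum_insert has, Real.exp_ne_zero] using hz0
    exact ⟨hZ, by rw [Finset.card_insert_of_notMem has]; omega⟩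

theorem expSum_zeros_finite_and_ncard_lt (s : Finset ℝ) (c : ℝ → ℝ) (hc : ∃ t ∈ s, c t ≠ 0) :
    {x | expSum s c x = 0}.Finite ∧ {x | expSum s c x = 0}.ncard < s.card := by
  obtain ⟨t, ht, hct⟩ := hc
  have hsupp : expSum {t ∈ s | c t ≠ 0} c = expSum s c := funext fun x =>
    Finset.sum_filter_of_ne fun t _ h hct => h (by rw [hct, zero_mul])
  obtain ⟨hfin, hcard⟩ := expSum_zeros_finite_and_ncard_lt_of_forall_ne_zero {t ∈ s | c t ≠ 0} c
    ⟨t, Finset.mem_filter.2 ⟨ht, hct⟩⟩ fun t ht => (Finset.mem_filter.1 ht).2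
  rw [hsupp] at hfin hcard
  exact ⟨hfin, hcard.trans_le (Finset.card_filter_le _ _)⟩

namespace Matrix.IsHermitian

section RCLike

variable {n 𝕜 : Type*} [Fintype n] [DecidableEq n] [RCLike 𝕜] {A : Matrix n n 𝕜}
  (hA : A.IsHermitian)

theorem card_image_eigenvalues :
    (Finset.univ.image hA.eigenvalues).card = (spectrum ℝ A).ncard := by
  rw [hA.spectrum_real_eq_range_eigenvalues, ← Set.ncard_coe_finset, Finset.coe_image,
    Finset.coe_univ, Set.image_univ]

theorem pow_eq_cfc (r : ℕ) : A ^ r = hA.cfc (· ^ r) :=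
  (cfc_pow_id A r).symm.trans (hA.cfc_eq _)

theorem exp_smul_eq_cfc (β : ℝ) :
    NormedSpace.exp (β • A) = hA.cfc (fun x => Real.exp (β * x)) := by
  have hU : star (hA.eigenvectorUnitary : Matrix n n 𝕜) =
      (hA.eigenvectorUnitary : Matrix n n 𝕜)⁻¹ :=
    (inv_eq_right_inv (Unitary.coe_mul_star_self _)).symm
  have hexp : NormedSpace.exp (RCLike.ofReal ∘ (β * ·) ∘ hA.eigenvalues : n → 𝕜) =
      RCLike.ofReal ∘ (fun x => Real.exp (β * x)) ∘ hA.eigenvalues := by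
    ext k
    simp only [Pi.exp_def, Function.comp_apply, Real.exp_eq_exp_ℝ]
    exact (NormedSpace.map_exp (algebraMap ℝ 𝕜) (continuous_algebraMap ℝ 𝕜) _).symm
  rw [← cfc_const_mul_id β A, hA.cfc_eq, IsHermitian.cfc, IsHermitian.cfc,
    Unitary.conjStarAlgAut_apply, Unitary.conjStarAlgAut_apply, hU,
    exp_conj _ _ Unitary.isUnit_coe, exp_diagonal, hexp]

end RCLike

section Real

variable {n : Type*} [Fintype n] [DecidableEq n] {A : Matrix n n ℝ} (hA : A.IsHermitian)

theorem cfc_apply_self (f : ℝ → ℝ) (i : n) :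
    hA.cfc f i i = ∑ k, (hA.eigenvectorUnitary : Matrix n n ℝ) i k ^ 2 * f (hA.eigenvalues k) := by
  rw [IsHermitian.cfc, Unitary.conjStarAlgAut_apply, mul_apply]
  simp only [mul_diagonal, star_apply, star_trivial, Function.comp_apply, RCLike.ofReal_real_eq_id,
    id]
  exact Finset.sum_congr rfl fun k _ => by ring

/-- `(E_t)ᵢᵢ - (E_t)ⱼⱼ`, where `E_t` is the orthogonal projection onto the `t`-eigenspace. -/
noncomputable def diagDiffWeight (i j : n) (t : ℝ) : ℝ :=
  ∑ k with hA.eigenvalues k = t,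
    ((hA.eigenvectorUnitary : Matrix n n ℝ) i k ^ 2 -
      (hA.eigenvectorUnitary : Matrix n n ℝ) j k ^ 2)

theorem cfc_apply_self_sub_cfc_apply_self (f : ℝ → ℝ) (i j : n) :
    hA.cfc f i i - hA.cfc f j j =
      ∑ t ∈ Finset.univ.image hA.eigenvalues, hA.diagDiffWeight i j t * f t := by
  simp only [cfc_apply_self, ← Finset.sum_sub_distrib, diagDiffWeight, Finset.sum_mul]
  rw [← Finset.sum_fiberwise_of_maps_to (g := hA.eigenvalues)
    (fun k _ => Finset.mem_image_of_mem _ (Finset.mem_univ k))]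
  refine Finset.sum_congr rfl fun t _ => Finset.sum_congr rfl fun k hk => ?_
  rw [(Finset.mem_filter.1 hk).2]
  ring

end Real

end Matrix.IsHermitian

theorem interlacing_values_card_le_of_not_cospectral (n d : ℕ)
    (A : Matrix (Fin n) (Fin n) ℝ) (hA : A.IsSymm)
    (hd : (spectrum ℝ A).ncard = d)
    (i j : Fin n)
    (hnc : ¬ ∀ r : ℕ, (A ^ r) i i = (A ^ r) j j) :
    {β : ℝ | 0 < β ∧ (NormedSpace.exp (β • A)) i i = (NormedSpace.exp (β • A)) j j}.Finite ∧
    {β : ℝ | 0 < β ∧ (NormedSpace.exp (β • A)) i i = (NormedSpace.exp (β • A)) j j}.ncard ≤ d - 1 := by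
  have hH : A.IsHermitian := by rwa [IsHermitian, conjTranspose_eq_transpose_of_trivial]
  set S := Finset.univ.image hH.eigenvalues
  set c := hH.diagDiffWeight i j
  obtain ⟨r, hr⟩ := not_forall.1 hnc
  have hc : ∃ t ∈ S, c t ≠ 0 := by
    by_contra! h
    refine hr (sub_eq_zero.1 ?_)
    rw [hH.pow_eq_cfc, hH.cfc_apply_self_sub_cfc_apply_self]
    exact Finset.sum_eq_zero fun t ht => mul_eq_zero_of_left (h t ht) _
  have hsub : {β : ℝ | 0 < β ∧ (NormedSpace.exp (β • A)) i i = (NormedSpace.exp (β • A)) j j} ⊆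
      {x | expSum S c x = 0} := by
    rintro β ⟨-, hβ⟩
    have := sub_eq_zero.2 hβ
    rw [hH.exp_smul_eq_cfc, hH.cfc_apply_self_sub_cfc_apply_self] at this
    simpa only [Set.mem_ofPred_eq, expSum, mul_comm _ β] using this
  obtain ⟨hfin, hcard⟩ := expSum_zeros_finite_and_ncard_lt S c hc
  have hS : S.card = d := hd ▸ hH.card_image_eigenvalues
  exact ⟨hfin.subset hsub, by have := Set.ncard_le_ncard hsub hfin; omega⟩
end

section
/- Let A be a real symmetric n×n matrix and i, j indices that are not cospectral. Then the set of β > 0 with (exp(β·A))ᵢᵢ = (exp(β·A))ⱼⱼ is finite. -/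
/-!
Diagonalising `A = U diag(λ) Uᵀ`, both `(Aʳ)ᵢᵢ - (Aʳ)ⱼⱼ` and `exp(βA)ᵢᵢ - exp(βA)ⱼⱼ` are
`∑ₖ cₖ g(λₖ)` with `cₖ = Uᵢₖ² - Uⱼₖ²`, for `g = (·)ʳ` and `g = exp(β ·)` respectively.
Non-cospectrality makes some moment `∑ₖ cₖ λₖʳ` nonzero, hence some grouped coefficient of a
distinct eigenvalue is nonzero; the largest such eigenvalue dominates the exponential sum, which
is therefore nonzero for all large `β`. Being real analytic and not identically zero, it has only
finitely many zeros in the remaining compact interval.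
-/

open Matrix Filter Topology

theorem AnalyticOnNhd.finite_setOf_lt_and_eq_zero {E : Type*} [NormedAddCommGroup E]
    [NormedSpace ℝ E] {f : ℝ → E} (hf : AnalyticOnNhd ℝ f Set.univ)
    (hev : ∀ᶠ x in atTop, f x ≠ 0) (a : ℝ) : {x | a < x ∧ f x = 0}.Finite := by
  obtain ⟨M, hM⟩ := eventually_atTop.mp hev
  have hcod : f ⁻¹' {0}ᶜ ∈ codiscreteWithin (Set.Icc a M) :=
    codiscreteWithin_mono (Set.subset_univ _) (hf.preimage_zero_mem_codiscrete (hM M le_rfl))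
  refine (isCompact_Icc.finite_sdiff_of_mem_codiscreteWithin hcod).subset ?_
  rintro x ⟨hax, hfx⟩
  exact ⟨⟨hax.le, not_lt.mp fun hMx => hM x hMx.le hfx⟩, by simpa using hfx⟩

theorem Finset.sum_mul_comp_eq_sum_image {ι κ R : Type*} [CommSemiring R] [DecidableEq κ]
    (s : Finset ι) (w : ι → R) (f : ι → κ) (g : κ → R) :
    ∑ i ∈ s, w i * g (f i) = ∑ y ∈ s.image f, (∑ i ∈ s with f i = y, w i) * g y := by
  rw [← Finset.sum_fiberwise_of_maps_to fun i hi => Finset.mem_image_of_mem f hi]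
  refine Finset.sum_congr rfl fun y _ => ?_
  rw [Finset.sum_mul]
  exact Finset.sum_congr rfl fun i hi => by rw [(Finset.mem_filter.mp hi).2]

namespace Real

theorem eventually_sum_mul_exp_ne_zero {s : Finset ℝ} {c : ℝ → ℝ} (h : ∃ μ ∈ s, c μ ≠ 0) :
    ∀ᶠ β in atTop, ∑ μ ∈ s, c μ * exp (β * μ) ≠ 0 := by
  classical
  have ht : (s.filter (c · ≠ 0)).Nonempty := by simpa [Finset.filter_nonempty_iff] using h
  set m := (s.filter (c · ≠ 0)).max' ht
  obtain ⟨hms, hcm⟩ := Finset.mem_filter.mp ((s.filter (c · ≠ 0)).max'_mem ht)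
  have hlim : Tendsto (fun β => ∑ μ ∈ s, c μ * exp (β * (μ - m))) atTop (𝓝 (c m)) := by
    rw [← (Finset.sum_ite_eq' s m c).trans (if_pos hms)]
    refine tendsto_finsetSum _ fun μ hμ => ?_
    rcases lt_trichotomy μ m with hlt | rfl | hgt
    · rw [if_neg hlt.ne]
      simpa using ((tendsto_exp_atBot.comp
        (tendsto_id.atTop_mul_const_of_neg (sub_neg.mpr hlt))).const_mul (c μ))
    · simp
    · have hcμ : c μ = 0 := by
        by_contra hne
        exact hgt.not_ge ((s.filter (c · ≠ 0)).le_max' μ (Finset.mem_filter.mpr ⟨hμ, hne⟩))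
      simp [hcμ]
  filter_upwards [hlim.eventually_ne hcm] with β hβ hzero
  refine hβ ?_
  calc ∑ μ ∈ s, c μ * exp (β * (μ - m)) = exp (-(β * m)) * ∑ μ ∈ s, c μ * exp (β * μ) := by
        rw [Finset.mul_sum]
        refine Finset.sum_congr rfl fun μ _ => ?_
        rw [mul_left_comm, ← exp_add]
        ring_nf
    _ = 0 := by rw [hzero, mul_zero]

theorem eventually_sum_mul_exp_ne_zero_of_moment {ι : Type*} {s : Finset ι} {c μ : ι → ℝ}
    (h : ∃ r : ℕ, ∑ k ∈ s, c k * μ k ^ r ≠ 0) :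
    ∀ᶠ β in atTop, ∑ k ∈ s, c k * exp (β * μ k) ≠ 0 := by
  classical
  obtain ⟨r, hr⟩ := h
  have hcoeff : ∃ y ∈ s.image μ, ∑ k ∈ s with μ k = y, c k ≠ 0 := by
    by_contra! hzero
    refine hr ?_
    rw [Finset.sum_mul_comp_eq_sum_image s c μ (· ^ r)]
    exact Finset.sum_eq_zero fun y hy => by rw [hzero y hy, zero_mul]
  filter_upwards [eventually_sum_mul_exp_ne_zero hcoeff] with β hβ
  rwa [Finset.sum_mul_comp_eq_sum_image s c μ fun x => exp (β * x)]

end Real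

namespace Matrix.IsHermitian

variable {ι : Type*} [Fintype ι] [DecidableEq ι] {A : Matrix ι ι ℝ}

theorem cfc_apply_self_s6 (hA : A.IsHermitian) (f : ℝ → ℝ) (a : ι) :
    cfc f A a a = ∑ k, hA.eigenvectorBasis k a ^ 2 * f (hA.eigenvalues k) := by
  rw [hA.cfc_eq, IsHermitian.cfc, Unitary.conjStarAlgAut_apply, mul_apply]
  simp [mul_diagonal, sq, mul_right_comm]

theorem pow_apply_self (hA : A.IsHermitian) (r : ℕ) (a : ι) :
    (A ^ r) a a = ∑ k, hA.eigenvectorBasis k a ^ 2 * hA.eigenvalues k ^ r := by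
  rw [← cfc_pow_id (R := ℝ) A r hA.isSelfAdjoint, hA.cfc_apply_self_s6]

theorem exp_smul_apply_self (hA : A.IsHermitian) (β : ℝ) (a : ι) :
    NormedSpace.exp (β • A) a a =
      ∑ k, hA.eigenvectorBasis k a ^ 2 * Real.exp (β * hA.eigenvalues k) := by
  -- Matrices carry no global norm; `NormedSpace.exp` does not depend on it, so any matrix norm
  -- (here the ℓ∞ operator norm) lets us apply the CFC lemma for normed algebras.
  have hexp : cfc (fun x => Real.exp (β * x)) A = NormedSpace.exp (β • A) := by
    rw [cfc_comp_const_mul β Real.exp A]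
    exact @CFC.real_exp_eq_normedSpace_exp _ Matrix.linftyOpNormedRing _
      Matrix.linftyOpNormedAlgebra instContinuousFunctionalCalculus _
      ((IsSelfAdjoint.all β).smul hA.isSelfAdjoint)
  rw [← hexp, hA.cfc_apply_self_s6]

end Matrix.IsHermitian

theorem interlacing_values_finite_of_not_cospectral (n : ℕ)
    (A : Matrix (Fin n) (Fin n) ℝ) (hA : A.IsSymm)
    (i j : Fin n)
    (hnc : ¬ ∀ r : ℕ, (A ^ r) i i = (A ^ r) j j) :
    {β : ℝ | 0 < β ∧ (NormedSpace.exp (β • A)) i i = (NormedSpace.exp (β • A)) j j}.Finite := by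
  have hH : A.IsHermitian := isHermitian_iff_isSymm.mpr hA
  set c : Fin n → ℝ := fun k => hH.eigenvectorBasis k i ^ 2 - hH.eigenvectorBasis k j ^ 2
  have hmoment : ∃ r : ℕ, ∑ k, c k * hH.eigenvalues k ^ r ≠ 0 := by
    obtain ⟨r, hr⟩ := not_forall.mp hnc
    exact ⟨r, by simpa [c, sub_mul, hH.pow_apply_self, sub_eq_zero] using hr⟩
  have hdiff (β : ℝ) : NormedSpace.exp (β • A) i i - NormedSpace.exp (β • A) j j =
      ∑ k, c k * Real.exp (β * hH.eigenvalues k) := by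
    simp [c, sub_mul, hH.exp_smul_apply_self]
  have hanalytic : AnalyticOnNhd ℝ (fun β => ∑ k, c k * Real.exp (β * hH.eigenvalues k))
      Set.univ := fun _ _ => by fun_prop
  refine (hanalytic.finite_setOf_lt_and_eq_zero
    (Real.eventually_sum_mul_exp_ne_zero_of_moment hmoment) 0).subset ?_
  rintro β ⟨hβ, heq⟩
  exact ⟨hβ, by rw [← hdiff, heq, sub_self]⟩
end

section
/- Let A be a real n×n matrix, ρ its spectral radius, and i, j indices that are not cospectral. Then there are at most n − 1 values α in (0, 1/ρ) such that ((I − αA)⁻¹)ᵢᵢ = ((I − αA)⁻¹)ⱼⱼ. -/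
/-!
Over the power series ring, `(1 - X • A) * ∑ Aʳ Xʳ = 1`, so
`adj (1 - X • A) = det (1 - X • A) • ∑ Aʳ Xʳ` with a unit determinant. Hence the polynomial
`q = adj (1 - X • A) i i - adj (1 - X • A) j j` vanishes only if `i` and `j` are cospectral.
Its degree is at most `n - 1`, since diagonal entries of the adjugate are principal minors of
size `n - 1`. For `0 < α < 1 / ρ` the matrix `1 - α • A` is invertible, and by Cramer's rule
equal resolvent entries at `α` make `α` a root of `q`.
-/

open Matrix Polynomial

namespace Matrix

variable {ι R : Type*} [Fintype ι] [DecidableEq ι] [CommRing R]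

theorem one_sub_X_smul_mul_geometric (A : Matrix ι ι R) :
    (1 - (PowerSeries.X : PowerSeries R) • A.map PowerSeries.C) *
      of (fun k l => PowerSeries.mk fun r => (A ^ r) k l) = 1 := by
  ext k l (_ | r)
  · simp [sub_mul, mul_apply, one_apply, apply_ite (PowerSeries.coeff 0)]
  · simp [sub_mul, mul_apply, one_apply, mul_assoc, PowerSeries.coeff_succ_X_mul, pow_succ',
      apply_ite (PowerSeries.coeff (r + 1))]

theorem coeToPowerSeries_mapMatrix_one_sub_X_smul (A : Matrix ι ι R) :
    coeToPowerSeries.ringHom.mapMatrix (1 - (X : R[X]) • A.map C) =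
      1 - (PowerSeries.X : PowerSeries R) • A.map PowerSeries.C := by
  ext k l : 1
  by_cases hkl : k = l <;> simp [hkl, X_mul_C, PowerSeries.X_mul]

theorem pow_apply_eq_of_adjugate_one_sub_X_smul_apply_eq (A : Matrix ι ι R) {i j i' j' : ι}
    (h : adjugate (1 - (X : R[X]) • A.map C) i j = adjugate (1 - (X : R[X]) • A.map C) i' j')
    (r : ℕ) : (A ^ r) i j = (A ^ r) i' j' := by
  have hps : adjugate (1 - (PowerSeries.X : PowerSeries R) • A.map PowerSeries.C) i j =
      adjugate (1 - (PowerSeries.X : PowerSeries R) • A.map PowerSeries.C) i' j' := by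
    rw [← coeToPowerSeries_mapMatrix_one_sub_X_smul, ← RingHom.map_adjugate]
    simp [h]
  set M := 1 - (PowerSeries.X : PowerSeries R) • A.map PowerSeries.C
  set G : Matrix ι ι (PowerSeries R) := of fun k l => PowerSeries.mk fun r => (A ^ r) k l
  have hMG : M * G = 1 := one_sub_X_smul_mul_geometric A
  have hadj : adjugate M = M.det • G := by
    rw [← mul_one (adjugate M), ← hMG, ← mul_assoc, adjugate_mul, smul_one_mul]
  rw [hadj, smul_apply, smul_apply, (isUnit_det_of_right_inverse hMG).smul_left_cancel] at hps
  simpa [G] using congrArg (PowerSeries.coeff r) hps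

theorem natDegree_adjugate_one_sub_X_smul_apply_self_le {n : ℕ} (A : Matrix (Fin n) (Fin n) R)
    (i : Fin n) : (adjugate (1 - (X : R[X]) • A.map C) i i).natDegree ≤ n - 1 := by
  cases n with
  | zero => exact i.elim0
  | succ m =>
    have hsub : (1 - (X : R[X]) • A.map C).submatrix i.succAbove i.succAbove =
        (X : R[X]) • (-A.submatrix i.succAbove i.succAbove).map C + (1 : Matrix _ _ R).map C := by
      ext k l
      simp [one_apply, sub_eq_neg_add, add_comm]
    rw [adjugate_fin_succ_eq_det_submatrix, hsub]
    refine natDegree_mul_le.trans ?_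
    simpa using natDegree_det_X_add_C_le (-A.submatrix i.succAbove i.succAbove) 1

theorem mapMatrix_evalRingHom_one_sub_X_smul (A : Matrix ι ι R) (a : R) :
    (evalRingHom a).mapMatrix (1 - (X : R[X]) • A.map C) = 1 - a • A := by
  ext k l
  by_cases hkl : k = l <;> simp [hkl, mul_comm _ a]

theorem isRoot_adjugate_sub_of_inv_apply_eq {K : Type*} [Field K] (A : Matrix ι ι K) {a : K}
    (hdet : (1 - a • A).det ≠ 0) {i j i' j' : ι}
    (h : (1 - a • A)⁻¹ i j = (1 - a • A)⁻¹ i' j') :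
    (adjugate (1 - (X : K[X]) • A.map C) i j -
      adjugate (1 - (X : K[X]) • A.map C) i' j').IsRoot a := by
  rw [inv_def, smul_apply, smul_apply, Ring.inverse_eq_inv, smul_eq_mul, smul_eq_mul,
    mul_right_inj' (inv_ne_zero hdet), ← mapMatrix_evalRingHom_one_sub_X_smul,
    ← RingHom.map_adjugate] at h
  simpa [sub_eq_zero] using h

theorem det_one_sub_smul_ne_zero_of_nnnorm_lt_inv_spectralRadius (A : Matrix ι ι ℝ) {a : ℝ}
    (ha : ‖a‖₊ < (spectralRadius ℂ (A.map Complex.ofReal))⁻¹) : (1 - a • A).det ≠ 0 := by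
  -- `spectrum` does not depend on a norm; any Banach algebra norm on matrices will do here.
  let := Matrix.linftyOpNormedRing (n := ι) (α := ℂ)
  let := Matrix.linftyOpNormedAlgebra (n := ι) (α := ℂ) (R := ℂ)
  have hunit := spectrum.isUnit_one_sub_smul_of_lt_inv_radius (𝕜 := ℂ) (z := (a : ℂ))
    (by simpa using ha)
  have hmap : 1 - (a : ℂ) • A.map Complex.ofReal = Complex.ofRealHom.mapMatrix (1 - a • A) := by
    ext k l
    by_cases hkl : k = l <;> simp [hkl]
  rw [isUnit_iff_isUnit_det, hmap, ← RingHom.map_det] at hunit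
  simpa using hunit.ne_zero

end Matrix

theorem resolvent_interlacing_values_card_le (n : ℕ)
    (A : Matrix (Fin n) (Fin n) ℝ) (ρ : ℝ) (hρ : 0 < ρ)
    (hrad : spectralRadius ℂ (A.map (Complex.ofReal ·)) = ENNReal.ofReal ρ)
    (i j : Fin n)
    (hnc : ¬ ∀ r : ℕ, (A ^ r) i i = (A ^ r) j j) :
    {α : ℝ | α ∈ Set.Ioo 0 (1 / ρ) ∧ ((1 - α • A)⁻¹) i i = ((1 - α • A)⁻¹) j j}.Finite ∧
    {α : ℝ | α ∈ Set.Ioo 0 (1 / ρ) ∧ ((1 - α • A)⁻¹) i i = ((1 - α • A)⁻¹) j j}.ncard ≤ n - 1 := by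
  set q : ℝ[X] := adjugate (1 - (X : ℝ[X]) • A.map C) i i - adjugate (1 - (X : ℝ[X]) • A.map C) j j
  have hq : q ≠ 0 := fun hq =>
    hnc (A.pow_apply_eq_of_adjugate_one_sub_X_smul_apply_eq (sub_eq_zero.mp hq))
  have hsub : {α : ℝ | α ∈ Set.Ioo 0 (1 / ρ) ∧ ((1 - α • A)⁻¹) i i = ((1 - α • A)⁻¹) j j} ⊆
      q.rootSet ℝ := by
    rintro α ⟨⟨hα, hαρ⟩, hres⟩
    have hdet : (1 - α • A).det ≠ 0 := by
      refine A.det_one_sub_smul_ne_zero_of_nnnorm_lt_inv_spectralRadius ?_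
      rwa [hrad, ← ENNReal.ofReal_inv_of_pos hρ, ← ENNReal.ofReal_coe_nnreal, coe_nnnorm,
        Real.norm_of_nonneg hα.le, ENNReal.ofReal_lt_ofReal_iff (by positivity), ← one_div]
    exact mem_rootSet.mpr ⟨hq, A.isRoot_adjugate_sub_of_inv_apply_eq hdet hres⟩
  have hroots := q.rootSet_finite ℝ
  refine ⟨hroots.subset hsub, ?_⟩
  calc _ ≤ (q.rootSet ℝ).ncard := Set.ncard_le_ncard hsub hroots
    _ ≤ q.natDegree := q.ncard_rootSet_le ℝ
    _ ≤ n - 1 := (natDegree_sub_le _ _).trans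
      (max_le (A.natDegree_adjugate_one_sub_X_smul_apply_self_le i)
        (A.natDegree_adjugate_one_sub_X_smul_apply_self_le j))
end

section
/- Let A be a real symmetric n×n matrix with exactly d distinct eigenvalues, ρ > 0 its spectral radius, and i, j indices that are not cospectral. Then there are at most d − 1 values α in (0, 1/ρ) such that ((I − αA)⁻¹)ᵢᵢ = ((I − αA)⁻¹)ⱼⱼ. -/
/-!
Write `A = ∑ θ • E θ` over the spectrum, with `E θ = cfc (Pi.single θ 1) A` the spectral
idempotents. Then for every `f`, `f(A)ᵢᵢ - f(A)ⱼⱼ = ∑ θ, f θ * c θ` with `c θ = (E θ)ᵢᵢ - (E θ)ⱼⱼ`,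
and non-cospectrality (`f = (· ^ r)`) says some `c θ ≠ 0`. For `α ∈ (0, 1/ρ)` every `1 - α θ` is
positive, the resolvent is `f(A)` for `f x = (1 - α x)⁻¹`, and the resolvent difference is
`α⁻¹ ∑ θ, c θ / (α⁻¹ - θ)`. Clearing denominators, `α⁻¹` is a root of the nonzero polynomial
`∑ θ, c θ ∏_{θ' ≠ θ} (X - θ')` of degree at most `d - 1`; it is nonzero because its value at a
node `θ` is `c θ ∏_{θ' ≠ θ} (θ - θ')`.
-/
open Matrix Polynomial Finset

section FiniteSpectrum

variable {R A : Type*} {p : A → Prop} [CommSemiring R] [StarRing R] [MetricSpace R]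
  [IsTopologicalSemiring R] [ContinuousStar R] [Ring A] [StarRing A] [TopologicalSpace A]
  [Algebra R A] [ContinuousFunctionalCalculus R A p] [DecidableEq R]

theorem cfc_eq_sum_smul_cfc_single (f : R → R) (a : A) (hfin : (spectrum R a).Finite) :
    cfc f a = ∑ t ∈ hfin.toFinset, f t • cfc (Pi.single t 1) a := by
  have hsplit :
      (spectrum R a).EqOn f (∑ t ∈ hfin.toFinset, fun x ↦ f t • (Pi.single t 1 : R → R) x) := by
    intro x hx
    simp [Finset.sum_apply, Pi.single_apply, hfin.mem_toFinset.mpr hx]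
  rw [cfc_congr hsplit, cfc_sum _ _ _ fun _ _ ↦ hfin.continuousOn _]
  exact Finset.sum_congr rfl fun t _ ↦ cfc_smul _ _ _ (hfin.continuousOn _)

end FiniteSpectrum

theorem cfc_one_sub_mul_inv {R A : Type*} {p : A → Prop} [Field R] [StarRing R] [MetricSpace R]
    [IsTopologicalRing R] [ContinuousStar R] [ContinuousInv₀ R] [Ring A] [StarRing A]
    [TopologicalSpace A] [Algebra R A] [ContinuousFunctionalCalculus R A p]
    (a : A) (α : R) (h : ∀ x ∈ spectrum R a, 1 - α * x ≠ 0) (ha : p a) :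
    cfc (fun x ↦ (1 - α * x)⁻¹) a = Ring.inverse (1 - α • a) := by
  rw [cfc_inv (fun x ↦ 1 - α * x) a h, cfc_sub _ _ a, cfc_const_one R a, cfc_const_mul_id α a]

theorem Matrix.inv_one_sub_smul_eq_cfc {n : Type*} [Fintype n] [DecidableEq n]
    {A : Matrix n n ℝ} (hA : IsSelfAdjoint A) {α : ℝ} (h : ∀ x ∈ spectrum ℝ A, 1 - α * x ≠ 0) :
    (1 - α • A)⁻¹ = cfc (fun x ↦ (1 - α * x)⁻¹) A := by
  rw [cfc_one_sub_mul_inv A α h hA, nonsing_inv_eq_ringInverse]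

theorem Matrix.cfc_apply_sub_cfc_apply {n : Type*} [Fintype n] [DecidableEq n]
    {A : Matrix n n ℝ} (hfin : (spectrum ℝ A).Finite) (f : ℝ → ℝ) (i j : n) :
    cfc f A i i - cfc f A j j =
      ∑ t ∈ hfin.toFinset, f t * (cfc (Pi.single t 1) A i i - cfc (Pi.single t 1) A j j) := by
  simp only [cfc_eq_sum_smul_cfc_single f A hfin, Matrix.sum_apply, Matrix.smul_apply, smul_eq_mul,
    mul_sub, Finset.sum_sub_distrib]

theorem spectrum.norm_le_of_spectralRadius_le {𝕜 A : Type*} [NormedField 𝕜] [Ring A]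
    [Algebra 𝕜 A] {a : A} {ρ : ℝ} (hρ : 0 ≤ ρ) (hrad : spectralRadius 𝕜 a ≤ ENNReal.ofReal ρ)
    {x : 𝕜} (hx : x ∈ spectrum 𝕜 a) : ‖x‖ ≤ ρ := by
  have hx' : (‖x‖₊ : ENNReal) ≤ ENNReal.ofReal ρ := (le_iSup₂ (α := ENNReal) x hx).trans hrad
  rwa [← ENNReal.ofReal_coe_nnreal, coe_nnnorm, ENNReal.ofReal_le_ofReal_iff hρ] at hx'

theorem spectrum.one_sub_mul_pos_of_lt_inv_spectralRadius {A : Type*} [Ring A] [Algebra ℝ A]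
    {a : A} {ρ α x : ℝ} (hrad : spectralRadius ℝ a ≤ ENNReal.ofReal ρ)
    (hα : α ∈ Set.Ioo 0 (1 / ρ)) (hx : x ∈ spectrum ℝ a) : 0 < 1 - α * x := by
  obtain ⟨hα0, hαρ⟩ := hα
  have hρ : 0 < ρ := one_div_pos.mp (hα0.trans hαρ)
  have hxρ : |x| ≤ ρ := spectrum.norm_le_of_spectralRadius_le hρ.le hrad hx
  have hαρ' : α * ρ < 1 := (lt_div_iff₀ hρ).mp hαρ
  nlinarith [le_abs_self x]

section SumDivSub

variable {K : Type*} [Field K] [DecidableEq K] (T : Finset K) (c : K → K)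

noncomputable def sumDivSubNumerator : K[X] :=
  ∑ t ∈ T, C (c t) * Lagrange.nodal (T.erase t) id

theorem natDegree_sumDivSubNumerator_le : (sumDivSubNumerator T c).natDegree ≤ #T - 1 := by
  refine natDegree_sum_le_of_forall_le _ _ fun t ht ↦ (natDegree_C_mul_le _ _).trans ?_
  rw [Lagrange.natDegree_nodal, card_erase_of_mem ht]

theorem eval_sumDivSubNumerator_of_mem {t : K} (ht : t ∈ T) :
    (sumDivSubNumerator T c).eval t = c t * ∏ s ∈ T.erase t, (t - s) := by
  rw [sumDivSubNumerator, eval_finsetSum, sum_eq_single_of_mem t ht]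
  · rw [eval_mul, eval_C, Lagrange.eval_nodal]
    rfl
  · exact fun s _ hst ↦ (eval_mul ..).trans <| mul_eq_zero_of_right _ <|
      Lagrange.eval_nodal_at_node (v := id) (mem_erase.mpr ⟨hst.symm, ht⟩)

theorem sumDivSubNumerator_ne_zero (hc : ∃ t ∈ T, c t ≠ 0) : sumDivSubNumerator T c ≠ 0 := by
  obtain ⟨t, ht, hct⟩ := hc
  intro hQ
  have heval := eval_sumDivSubNumerator_of_mem T c ht
  rw [hQ, eval_zero] at heval
  exact mul_ne_zero hct (prod_ne_zero_iff.mpr fun s hs ↦ sub_ne_zero.mpr (ne_of_mem_erase hs).symm)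
    heval.symm

theorem eval_sumDivSubNumerator_of_notMem {z : K} (hz : z ∉ T) :
    (sumDivSubNumerator T c).eval z = (∏ s ∈ T, (z - s)) * ∑ t ∈ T, c t / (z - t) := by
  rw [sumDivSubNumerator, eval_finsetSum, mul_sum]
  refine sum_congr rfl fun t ht ↦ ?_
  have hzt : z - t ≠ 0 := sub_ne_zero.mpr (ne_of_mem_of_not_mem ht hz).symm
  rw [eval_mul, eval_C, Lagrange.eval_nodal, ← mul_prod_erase T (z - ·) ht]
  field_simp
  rfl

theorem setOf_sum_div_sub_eq_zero_finite_and_ncard_le (hc : ∃ t ∈ T, c t ≠ 0) :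
    {z | z ∉ T ∧ ∑ t ∈ T, c t / (z - t) = 0}.Finite ∧
      {z | z ∉ T ∧ ∑ t ∈ T, c t / (z - t) = 0}.ncard ≤ #T - 1 := by
  set Q := sumDivSubNumerator T c
  have hQ : Q ≠ 0 := sumDivSubNumerator_ne_zero T c hc
  have hsub : {z | z ∉ T ∧ ∑ t ∈ T, c t / (z - t) = 0} ⊆ Q.rootSet K := by
    rintro z ⟨hz, hsum⟩
    rw [mem_rootSet_of_ne hQ, coe_aeval_eq_eval, eval_sumDivSubNumerator_of_notMem T c hz, hsum,
      mul_zero]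
  exact ⟨(rootSet_finite Q K).subset hsub, (Set.ncard_le_ncard hsub (rootSet_finite Q K)).trans <|
    (ncard_rootSet_le Q K).trans (natDegree_sumDivSubNumerator_le T c)⟩

end SumDivSub

theorem div_inv_sub_eq_mul_inv_one_sub_mul {K : Type*} [Field K] {α : K} (hα : α ≠ 0) (t x : K) :
    x / (α⁻¹ - t) = α * ((1 - α * t)⁻¹ * x) := by
  rw [div_eq_mul_inv, show α⁻¹ - t = α⁻¹ * (1 - α * t) by field_simp, mul_inv, inv_inv]
  ring

theorem resolvent_interlacing_values_card_le_distinct_eigenvalues_general (n d : ℕ)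
    (A : Matrix (Fin n) (Fin n) ℝ) (hA : A.IsSymm)
    (hd : (spectrum ℝ A).ncard = d)
    (ρ : ℝ)
    (hrad : spectralRadius ℝ A = ENNReal.ofReal ρ)
    (i j : Fin n)
    (hnc : ¬ ∀ r : ℕ, (A ^ r) i i = (A ^ r) j j) :
    {α : ℝ | α ∈ Set.Ioo 0 (1 / ρ) ∧ ((1 - α • A)⁻¹) i i = ((1 - α • A)⁻¹) j j}.Finite ∧
    {α : ℝ | α ∈ Set.Ioo 0 (1 / ρ) ∧ ((1 - α • A)⁻¹) i i = ((1 - α • A)⁻¹) j j}.ncard ≤ d - 1 := by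
  have hA' : IsSelfAdjoint A := isHermitian_iff_isSymm.mpr hA
  have hfin := A.finite_real_spectrum
  set T := hfin.toFinset
  set c : ℝ → ℝ := fun t ↦ cfc (Pi.single t 1 : ℝ → ℝ) A i i - cfc (Pi.single t 1 : ℝ → ℝ) A j j
  have hdiag : ∀ f, cfc f A i i - cfc f A j j = ∑ t ∈ T, f t * c t :=
    fun f ↦ cfc_apply_sub_cfc_apply hfin f i j
  have hc : ∃ t ∈ T, c t ≠ 0 := by
    contrapose! hnc
    intro r
    rw [← sub_eq_zero, ← cfc_pow_id (R := ℝ) A r, hdiag]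
    exact sum_eq_zero fun t ht ↦ by rw [hnc t ht, mul_zero]
  have hsub : {α : ℝ | α ∈ Set.Ioo 0 (1 / ρ) ∧ ((1 - α • A)⁻¹) i i = ((1 - α • A)⁻¹) j j} ⊆
      (·⁻¹) '' {z | z ∉ T ∧ ∑ t ∈ T, c t / (z - t) = 0} := by
    rintro α ⟨hα, hres⟩
    have hpos : ∀ x ∈ spectrum ℝ A, 0 < 1 - α * x :=
      fun x hx ↦ spectrum.one_sub_mul_pos_of_lt_inv_spectralRadius hrad.le hα hx
    refine ⟨α⁻¹, ⟨fun hT ↦ ?_, ?_⟩, inv_inv α⟩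
    · simpa [mul_inv_cancel₀ hα.1.ne'] using hpos _ (hfin.mem_toFinset.mp hT)
    · rw [inv_one_sub_smul_eq_cfc hA' fun x hx ↦ (hpos x hx).ne', ← sub_eq_zero, hdiag] at hres
      simp only [div_inv_sub_eq_mul_inv_one_sub_mul hα.1.ne', ← mul_sum, hres, mul_zero]
  obtain ⟨hZfin, hZcard⟩ := setOf_sum_div_sub_eq_zero_finite_and_ncard_le T c hc
  refine ⟨(hZfin.image _).subset hsub, ?_⟩
  calc _ ≤ ((·⁻¹) '' {z | z ∉ T ∧ ∑ t ∈ T, c t / (z - t) = 0}).ncard :=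
        Set.ncard_le_ncard hsub (hZfin.image _)
    _ ≤ #T - 1 := (Set.ncard_image_le hZfin).trans hZcard
    _ = d - 1 := by rw [← hd, Set.ncard_eq_toFinset_card _ hfin]

theorem resolvent_interlacing_values_card_le_distinct_eigenvalues (n d : ℕ)
    (A : Matrix (Fin n) (Fin n) ℝ) (hA : A.IsSymm)
    (hd : (spectrum ℝ A).ncard = d)
    (ρ : ℝ) (hρ : 0 < ρ)
    (hrad : spectralRadius ℝ A = ENNReal.ofReal ρ)
    (i j : Fin n)
    (hnc : ¬ ∀ r : ℕ, (A ^ r) i i = (A ^ r) j j) :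
    {α : ℝ | α ∈ Set.Ioo 0 (1 / ρ) ∧ ((1 - α • A)⁻¹) i i = ((1 - α • A)⁻¹) j j}.Finite ∧
    {α : ℝ | α ∈ Set.Ioo 0 (1 / ρ) ∧ ((1 - α • A)⁻¹) i i = ((1 - α • A)⁻¹) j j}.ncard ≤ d - 1 :=
  resolvent_interlacing_values_card_le_distinct_eigenvalues_general n d A hA hd ρ hrad i j hnc
end

section
/- Let A be the adjacency matrix of a finite simple graph on n vertices, and let i, j be two vertices with deg(i) > deg(j). Then there exists β₀ > 0 such that for all 0 < β < β₀, (exp(β·A))ᵢᵢ > (exp(β·A))ⱼⱼ. -/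
/-!
Since the adjacency matrix `A` has zero diagonal and `(A²)ₐₐ = deg a`, the Taylor expansion of the
exponential gives `exp(βA)ₐₐ = 1 + β²/2 · deg a + O(β³)`. Hence
`exp(βA)ᵢᵢ - exp(βA)ⱼⱼ = (deg i - deg j)/2 · β² + O(β³)`, which is positive for small `β ≠ 0`.
-/

open Filter Topology Asymptotics Finset Nat NormedSpace Matrix

theorem exp_smul_sub_sum_range_isBigO_pow {𝕂 𝔸 : Type*} [RCLike 𝕂] [NormedRing 𝔸]
    [NormedAlgebra 𝕂 𝔸] [CompleteSpace 𝔸] (a : 𝔸) (n : ℕ) :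
    (fun t : 𝕂 => exp (t • a) - ∑ k ∈ range n, (t ^ k / k !) • a ^ k) =O[𝓝 0] (· ^ n) := by
  have htaylor := (exp_hasFPowerSeriesAt_zero (𝕂 := 𝕂) (𝔸 := 𝔸)).isBigO_sub_partialSum_pow n
  have hsmul : Tendsto (fun t : 𝕂 => t • a) (𝓝 0) (𝓝 0) := by
    simpa using (tendsto_id (x := 𝓝 (0 : 𝕂))).smul_const a
  refine ((htaylor.comp_tendsto hsmul).congr_left fun t => ?_).trans ?_
  · simp [FormalMultilinearSeries.partialSum, expSeries_apply_eq, smul_pow, div_eq_inv_mul,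
      mul_smul]
  · refine .of_bound (‖a‖ ^ n) (Eventually.of_forall fun t => ?_)
    simp [norm_smul, mul_pow, mul_comm]

namespace Matrix

-- Any submultiplicative norm would do: `exp` on matrices does not depend on the choice.
attribute [local instance] Matrix.linftyOpSeminormedAddCommGroup Matrix.linftyOpNormedRing
  Matrix.linftyOpNormedAlgebra

theorem norm_apply_le_linfty_opNorm {m n α : Type*} [Fintype m] [Fintype n]
    [SeminormedAddCommGroup α] (A : Matrix m n α) (i : m) (j : n) : ‖A i j‖ ≤ ‖A‖ :=
  calc ‖A i j‖ ≤ ‖WithLp.toLp 1 (A i)‖ := PiLp.norm_apply_le (WithLp.toLp 1 (A i)) j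
    _ ≤ ‖A‖ := norm_le_pi_norm (fun i => WithLp.toLp 1 (A i)) i

theorem exp_smul_apply_sub_sum_range_isBigO_pow {m 𝕂 : Type*} [Fintype m] [DecidableEq m]
    [RCLike 𝕂] (A : Matrix m m 𝕂) (a b : m) (n : ℕ) :
    (fun t : 𝕂 => exp (t • A) a b - ∑ k ∈ range n, t ^ k / k ! * (A ^ k) a b)
      =O[𝓝 0] (· ^ n) := by
  have : CompleteSpace (Matrix m m 𝕂) := FiniteDimensional.complete 𝕂 _
  refine (isBigO_of_le _ fun t => ?_).trans (exp_smul_sub_sum_range_isBigO_pow A n)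
  calc _ = ‖(exp (t • A) - ∑ k ∈ range n, (t ^ k / k !) • A ^ k) a b‖ := by
        simp [Matrix.sum_apply]
    _ ≤ _ := norm_apply_le_linfty_opNorm _ a b

end Matrix

theorem eventually_pos_of_sub_mul_sq_isBigO_pow_three {f : ℝ → ℝ} {c : ℝ} (hc : 0 < c)
    (hf : (fun t => f t - c * t ^ 2) =O[𝓝 0] (· ^ 3)) : ∀ᶠ t in 𝓝[≠] 0, 0 < f t := by
  have hsmall :=
    (hf.trans_isLittleO (isLittleO_pow_pow (by norm_num : 2 < 3))).bound (half_pos hc)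
  filter_upwards [nhdsWithin_le_nhds hsmall, self_mem_nhdsWithin] with t ht ht0
  have hsq : 0 < t ^ 2 := by have : t ≠ 0 := ht0; positivity
  rw [Real.norm_eq_abs, Real.norm_eq_abs, abs_of_pos hsq, abs_le] at ht
  nlinarith [ht.1]

theorem subgraphCentrality_gt_of_degree_gt_small_beta (n : ℕ)
    (G : SimpleGraph (Fin n)) [DecidableRel G.Adj] (i j : Fin n)
    (hdeg : G.degree j < G.degree i) :
    ∃ β₀ : ℝ, 0 < β₀ ∧ ∀ β : ℝ, 0 < β → β < β₀ →
      (NormedSpace.exp (β • G.adjMatrix ℝ)) j j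
        < (NormedSpace.exp (β • G.adjMatrix ℝ)) i i := by
  have htaylor (a : Fin n) :
      (fun t : ℝ => exp (t • G.adjMatrix ℝ) a a - (1 + t ^ 2 / 2 * G.degree a))
        =O[𝓝 0] (· ^ 3) := by
    have hsq : (G.adjMatrix ℝ ^ 2) a a = G.degree a := by
      rw [sq]; exact G.adjMatrix_mul_self_apply_self a
    refine (exp_smul_apply_sub_sum_range_isBigO_pow (G.adjMatrix ℝ) a a 3).congr_left fun t => ?_
    simp [sum_range_succ, hsq]
  have hgap : (0 : ℝ) < (G.degree i - G.degree j) / 2 :=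
    half_pos (sub_pos.2 (by exact_mod_cast hdeg))
  have hpos := eventually_pos_of_sub_mul_sq_isBigO_pow_three
    (f := fun t => exp (t • G.adjMatrix ℝ) i i - exp (t • G.adjMatrix ℝ) j j) hgap
    (((htaylor i).sub (htaylor j)).congr_left fun t => by ring)
  obtain ⟨β₀, hβ₀, hsub⟩ := mem_nhdsGT_iff_exists_Ioo_subset.1
    (nhdsWithin_mono _ (fun _ ht => ne_of_gt ht) hpos)
  exact ⟨β₀, hβ₀, fun β h0 h1 => sub_pos.1 (hsub ⟨h0, h1⟩)⟩
end
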